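/- For all integers p ≥ 0 and n ≥ 0, K(p,n) = ∫₀¹ (z(1-z))^((2p-1)/2) (z - 1/2)^(2n) dz = ((2p-1)!! · (2n-1)!! / (8^(p+n) · (p+n)!)) · π. -/

import Mathlib

/-!
Since `(z - 1/2)^2 = 1/4 - z(1-z)`, the integrals satisfy `K(p, n+1) = K(p, n)/4 - K(p+1, n)`,
and the closed form satisfies the same recurrence. At `n = 0` the integral is the beta integral
`B(p + 1/2, p + 1/2) = Γ(p + 1/2)² / (2p)!`, evaluated with `Γ(p + 1/2) = (2p-1)!! √π / 2^p`
and `(2p)! = 2^p p! (2p-1)!!`.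
-/

open MeasureTheory Real

/-- The odd double factorial `(2p-1)!! = 1·3···(2p-1)`, with `(-1)!! = 1`. -/
noncomputable def oddDoubleFactorial (p : ℕ) : ℝ :=
  ∏ i ∈ Finset.range p, (2 * (i : ℝ) + 1)

open scoped Nat

lemma oddDoubleFactorial_eq_doubleFactorial (p : ℕ) :
    oddDoubleFactorial p = ((2 * p - 1)‼ : ℕ) := by
  cases p with
  | zero => simp [oddDoubleFactorial]
  | succ p =>
    rw [oddDoubleFactorial, show 2 * (p + 1) - 1 = 2 * p + 1 by omega,
      Nat.doubleFactorial_eq_prod_odd, Finset.prod_range_succ']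
    push_cast
    ring

lemma oddDoubleFactorial_succ (p : ℕ) :
    oddDoubleFactorial (p + 1) = oddDoubleFactorial p * (2 * p + 1) :=
  Finset.prod_range_succ _ p

lemma Gamma_nat_add_half_eq_oddDoubleFactorial (p : ℕ) :
    Gamma (p + 1 / 2) = oddDoubleFactorial p * √π / 2 ^ p := by
  rw [Gamma_nat_add_half, oddDoubleFactorial_eq_doubleFactorial]

lemma factorial_two_mul_eq_oddDoubleFactorial (p : ℕ) :
    ((2 * p)! : ℝ) = 2 ^ p * p ! * oddDoubleFactorial p := by
  induction p with
  | zero => simp [oddDoubleFactorial]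
  | succ p ih =>
    rw [show 2 * (p + 1) = 2 * p + 1 + 1 by ring, Nat.factorial_succ, Nat.factorial_succ,
      Nat.factorial_succ, oddDoubleFactorial_succ]
    push_cast
    rw [ih]
    ring

lemma intervalIntegral_rpow_mul_one_sub_rpow {a b : ℝ} (ha : 0 < a) (hb : 0 < b) :
    ∫ x in (0:ℝ)..1, x ^ (a - 1) * (1 - x) ^ (b - 1) = Gamma a * Gamma b / Gamma (a + b) := by
  have h := Complex.betaIntegral_eq_Gamma_mul_div (u := a) (v := b)
    (by simpa using ha) (by simpa using hb)
  have hbeta : Complex.betaIntegral a b =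
      ((∫ x in (0:ℝ)..1, x ^ (a - 1) * (1 - x) ^ (b - 1) : ℝ) : ℂ) := by
    rw [← intervalIntegral.integral_ofReal, Complex.betaIntegral]
    refine intervalIntegral.integral_congr fun x hx => ?_
    rw [Set.uIcc_of_le zero_le_one] at hx
    rw [Complex.ofReal_mul, Complex.ofReal_cpow hx.1, Complex.ofReal_cpow (by linarith [hx.2])]
    push_cast
    ring
  rw [hbeta, ← Complex.ofReal_add, Complex.Gamma_ofReal, Complex.Gamma_ofReal,
    Complex.Gamma_ofReal] at h
  exact_mod_cast h

noncomputable def Kint (p n : ℕ) : ℝ :=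
  ∫ z in (0:ℝ)..1, (z * (1 - z)) ^ ((2 * (p : ℝ) - 1) / 2) * (z - 1/2) ^ (2 * n)

lemma Kint_zero (p : ℕ) : Kint p 0 = oddDoubleFactorial p / (8 ^ p * p !) * π := by
  have ha : (0:ℝ) < p + 1 / 2 := by positivity
  have hbeta : Kint p 0 =
      Gamma (p + 1 / 2) * Gamma (p + 1 / 2) / Gamma (p + 1 / 2 + (p + 1 / 2)) := by
    rw [← intervalIntegral_rpow_mul_one_sub_rpow ha ha, Kint]
    refine intervalIntegral.integral_congr fun z hz => ?_
    rw [Set.uIcc_of_le zero_le_one] at hz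
    rw [pow_zero, mul_one, mul_rpow hz.1 (by linarith [hz.2])]
    ring_nf
  rw [hbeta, show (p : ℝ) + 1 / 2 + (p + 1 / 2) = (2 * p : ℕ) + 1 by push_cast; ring,
    Gamma_nat_eq_factorial, factorial_two_mul_eq_oddDoubleFactorial,
    Gamma_nat_add_half_eq_oddDoubleFactorial]
  have hD : oddDoubleFactorial p ≠ 0 := by
    rw [oddDoubleFactorial_eq_doubleFactorial]; exact_mod_cast (Nat.doubleFactorial_pos _).ne'
  rw [show (8:ℝ) ^ p = 2 ^ p * 2 ^ p * 2 ^ p by rw [← mul_pow, ← mul_pow]; norm_num]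
  field_simp
  rw [sq_sqrt pi_nonneg]

lemma intervalIntegrable_Kint_integrand (p n : ℕ) :
    IntervalIntegrable (fun z : ℝ => (z * (1 - z)) ^ ((2 * (p : ℝ) - 1) / 2) * (z - 1/2) ^ (2 * n))
      volume 0 1 := by
  -- the integral of a non-integrable function is `0`, while `Kint p 0 > 0`
  have hK : Kint p 0 ≠ 0 := by
    rw [Kint_zero, oddDoubleFactorial_eq_doubleFactorial]
    have := Nat.doubleFactorial_pos (2 * p - 1)
    positivity
  have hint :
      IntervalIntegrable (fun z : ℝ => (z * (1 - z)) ^ ((2 * (p : ℝ) - 1) / 2)) volume 0 1 :=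
    intervalIntegral.intervalIntegrable_of_integral_ne_zero (by simpa [Kint] using hK)
  exact hint.mul_continuousOn (by fun_prop)

lemma Kint_succ (p n : ℕ) : Kint p (n + 1) = Kint p n / 4 - Kint (p + 1) n := by
  have hpoint : Set.EqOn
      (fun z : ℝ => (z * (1 - z)) ^ ((2 * (p : ℝ) - 1) / 2) * (z - 1/2) ^ (2 * (n + 1)))
      (fun z : ℝ => (z * (1 - z)) ^ ((2 * (p : ℝ) - 1) / 2) * (z - 1/2) ^ (2 * n) / 4
        - (z * (1 - z)) ^ ((2 * ((p + 1 : ℕ) : ℝ) - 1) / 2) * (z - 1/2) ^ (2 * n))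
      (Set.uIcc 0 1) := by
    intro z hz
    rw [Set.uIcc_of_le zero_le_one] at hz
    have hw : 0 ≤ z * (1 - z) := mul_nonneg hz.1 (by linarith [hz.2])
    have hexp : (2 * ((p + 1 : ℕ) : ℝ) - 1) / 2 = (2 * (p : ℝ) - 1) / 2 + 1 := by push_cast; ring
    have hpos : (2 * (p : ℝ) - 1) / 2 + 1 ≠ 0 := by linarith [p.cast_nonneg (α := ℝ)]
    simp only
    rw [hexp, rpow_add' hw hpos, rpow_one]
    ring
  rw [Kint, intervalIntegral.integral_congr hpoint, intervalIntegral.integral_sub,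
    intervalIntegral.integral_div]
  · rfl
  · exact (intervalIntegrable_Kint_integrand p n).div_const 4
  · exact intervalIntegrable_Kint_integrand (p + 1) n

lemma closedForm_recurrence (p n : ℕ) :
    oddDoubleFactorial p * oddDoubleFactorial (n + 1) / (8 ^ (p + (n + 1)) * (p + (n + 1))!) * π =
      oddDoubleFactorial p * oddDoubleFactorial n / (8 ^ (p + n) * (p + n)!) * π / 4 -
        oddDoubleFactorial (p + 1) * oddDoubleFactorial n /
          (8 ^ (p + 1 + n) * (p + 1 + n)!) * π := by
  rw [show p + (n + 1) = p + n + 1 by ring, show p + 1 + n = p + n + 1 by ring,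
    oddDoubleFactorial_succ, oddDoubleFactorial_succ, Nat.factorial_succ]
  push_cast
  field_simp
  ring

/-- For all integers `p, n ≥ 0`,
`∫₀¹ (z(1-z))^((2p-1)/2) (z - 1/2)^(2n) dz = ((2p-1)!!(2n-1)!!/(8^(p+n)(p+n)!)) π`. -/
theorem Kint_closed_form (p n : ℕ) :
    ∫ z in (0:ℝ)..1, (z * (1 - z)) ^ ((2 * (p : ℝ) - 1) / 2) * (z - 1/2) ^ (2 * n) =
      oddDoubleFactorial p * oddDoubleFactorial n /
        (8 ^ (p + n) * ((p + n).factorial : ℝ)) * π := by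
  change Kint p n = _
  induction n generalizing p with
  | zero => simpa [oddDoubleFactorial] using Kint_zero p
  | succ n ih => rw [Kint_succ, ih, ih, closedForm_recurrence]
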